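/- (Main theorem, constant step-size.) Let (α_k)_{k≥0} and (β_k)_{k≥0} be real sequences in (0,1) such that there exists α > 0 with α ≤ β_k < 1 − α_k for all k, lim_{k→∞} α_k = 0 and ∑_{k=1}^∞ α_k = ∞. Then the sequence (x^k)_{k≥0} generated by the FBF algorithm with constant step-size γ ∈ (0, 1/L) converges strongly (in norm) to the point p ∈ X* characterized as p = argmin{‖z‖ : z ∈ X*}, i.e. the minimal-norm solution of VI(X,F). -/

import Mathlib

/-!
Against every solution `q` the FBF step is strictly Fejér:
`‖r k - q‖² ≤ ‖x k - q‖² - (1 - γ²L²) ‖x k - z k‖²`. Since `x (k + 1)` is a convex combination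
of `x k`, `r k` and the anchor `0` (with weight `α k`), the iterates stay bounded, and for the
minimal-norm solution `p` the quantity `a k = ‖x k - p‖²` obeys
`a (k + 1) ≤ (1 - α k) a k + α k b k - κ ‖x k - z k‖²` with `b k = 2 ⟪p, p - x (k + 1)⟫`.
Along any subsequence on which the residual `‖x k - z k‖` vanishes, weak cluster points of `x` are
solutions (pseudomonotonicity and Minty's trick), so `limsup b ≤ 0` there, because `p` is the
projection of `0` onto the solution set. Maingé's lemma for such recursions (split according to
whether `a` is eventually nonincreasing) then gives `a k → 0`.
-/

open scoped RealInnerProductSpace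
open Filter Topology Set

section RealSequences

theorem tendsto_zero_of_eventually_le_one_sub_mul {d α : ℕ → ℝ} (hd : ∀ k, 0 ≤ d k)
    (hαsum : Tendsto (fun N => ∑ k ∈ Finset.range N, α k) atTop atTop)
    (hrec : ∀ᶠ k in atTop, d (k + 1) ≤ (1 - α k) * d k) :
    Tendsto d atTop (𝓝 0) := by
  set S := fun N => ∑ k ∈ Finset.range N, α k
  obtain ⟨N, hN⟩ := eventually_atTop.1 hrec
  -- `d k * exp (S k)` is nonincreasing from `N` on, because `1 - t ≤ exp (-t)`
  have hmono : ∀ k ≥ N, d k * Real.exp (S k) ≤ d N * Real.exp (S N) := by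
    refine Nat.le_induction le_rfl fun k hk ih => le_trans ?_ ih
    calc d (k + 1) * Real.exp (S (k + 1))
        ≤ Real.exp (-α k) * d k * Real.exp (S k + α k) := by
          rw [show S (k + 1) = S k + α k from Finset.sum_range_succ _ _]
          gcongr
          exact (hN k hk).trans (mul_le_mul_of_nonneg_right
            (by linarith [Real.add_one_le_exp (-α k)]) (hd k))
      _ = d k * Real.exp (S k) := by rw [Real.exp_add, Real.exp_neg]; field_simp
  have hbound : ∀ᶠ k in atTop, d k ≤ d N * Real.exp (S N) * Real.exp (-S k) :=
    (eventually_ge_atTop N).mono fun k hk => by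
      rw [Real.exp_neg, ← div_eq_mul_inv, le_div_iff₀ (Real.exp_pos _)]
      exact hmono k hk
  have hlim : Tendsto (fun k => d N * Real.exp (S N) * Real.exp (-S k)) atTop (𝓝 0) := by
    simpa using (Real.tendsto_exp_atBot.comp (tendsto_neg_atTop_atBot.comp hαsum)).const_mul
      (d N * Real.exp (S N))
  exact squeeze_zero' (Eventually.of_forall hd) hbound hlim

theorem tendsto_zero_of_forall_eventually_lt {a : ℕ → ℝ} (ha : ∀ k, 0 ≤ a k)
    (h : ∀ ε > 0, ∀ᶠ k in atTop, a k < ε) : Tendsto a atTop (𝓝 0) :=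
  tendsto_order.2 ⟨fun _ hl => Eventually.of_forall fun k => hl.trans_le (ha k), h⟩

theorem tendsto_zero_of_le_one_sub_mul_add_mul {a b α : ℕ → ℝ} (ha : ∀ k, 0 ≤ a k)
    (hα : ∀ k, α k ∈ Icc (0 : ℝ) 1)
    (hαsum : Tendsto (fun N => ∑ k ∈ Finset.range N, α k) atTop atTop)
    (hrec : ∀ k, a (k + 1) ≤ (1 - α k) * a k + α k * b k)
    (hb : ∀ ε > 0, ∀ᶠ k in atTop, b k < ε) :
    Tendsto a atTop (𝓝 0) := by
  refine tendsto_zero_of_forall_eventually_lt ha fun ε hε => ?_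
  have hd : Tendsto (fun k => max (a k - ε / 2) 0) atTop (𝓝 0) := by
    refine tendsto_zero_of_eventually_le_one_sub_mul (fun k => le_max_right _ _) hαsum ?_
    filter_upwards [hb (ε / 2) (half_pos hε)] with k hk
    obtain ⟨hα0, hα1⟩ := hα k
    refine max_le ?_ (mul_nonneg (sub_nonneg.2 hα1) (le_max_right _ _))
    calc a (k + 1) - ε / 2 ≤ (1 - α k) * (a k - ε / 2) + α k * (b k - ε / 2) := by
          linarith [hrec k]
      _ ≤ (1 - α k) * max (a k - ε / 2) 0 := by
          nlinarith [le_max_left (a k - ε / 2) 0, mul_nonneg hα0 (sub_nonneg.2 hk.le)]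
  filter_upwards [hd.eventually (gt_mem_nhds (half_pos hε))] with k hk
  linarith [le_max_left (a k - ε / 2) 0]

theorem exists_tendsto_of_eventually_antitone {a : ℕ → ℝ} (ha : ∀ k, 0 ≤ a k)
    (hanti : ∀ᶠ k in atTop, a (k + 1) ≤ a k) : ∃ ℓ, Tendsto a atTop (𝓝 ℓ) := by
  obtain ⟨N, hN⟩ := eventually_atTop.1 hanti
  have hmono : Antitone fun j => a (j + N) :=
    antitone_nat_of_succ_le fun j => by simpa [add_right_comm] using hN (j + N) (by omega)
  exact ⟨_, (tendsto_add_atTop_iff_nat N).1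
    (tendsto_atTop_ciInf hmono ⟨0, fun _ ⟨j, hj⟩ => hj ▸ ha _⟩)⟩

theorem exists_tendsto_atTop_lt_succ_le_succ {a : ℕ → ℝ} (h : ∃ᶠ k in atTop, a k < a (k + 1)) :
    ∃ τ : ℕ → ℕ, Tendsto τ atTop atTop ∧
      ∀ᶠ n in atTop, a (τ n) < a (τ n + 1) ∧ a n ≤ a (τ n + 1) := by
  classical
  set P : ℕ → Prop := fun k => a k < a (k + 1)
  refine ⟨fun n => Nat.findGreatest P n, ?_, ?_⟩
  · refine tendsto_atTop_atTop.2 fun K => ?_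
    obtain ⟨k, hKk, hk⟩ := (frequently_atTop.1 h) K
    exact ⟨k, fun n hn => hKk.trans (Nat.le_findGreatest hn hk)⟩
  · obtain ⟨k₀, hk₀⟩ := h.exists
    filter_upwards [eventually_ge_atTop k₀] with n hn
    have hτ : P (Nat.findGreatest P n) := Nat.findGreatest_spec hn hk₀
    refine ⟨hτ, ?_⟩
    have hdesc : ∀ m ≥ Nat.findGreatest P n + 1, m ≤ n → a m ≤ a (Nat.findGreatest P n + 1) := by
      refine Nat.le_induction (fun _ => le_rfl) fun m hm ih hmn => ?_
      have := Nat.findGreatest_is_greatest (P := P) (by omega) (by omega : m ≤ n)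
      exact (not_lt.1 this).trans (ih (by omega))
    rcases (Nat.findGreatest_le (P := P) n).lt_or_eq with hlt | heq
    · exact hdesc n hlt le_rfl
    · exact (congrArg a heq).ge.trans hτ.le

theorem tendsto_zero_of_le_one_sub_mul_add_mul_sub {a b c α : ℕ → ℝ} {B : ℝ}
    (ha : ∀ k, 0 ≤ a k) (hc : ∀ k, 0 ≤ c k) (hα : ∀ k, α k ∈ Icc (0 : ℝ) 1)
    (hα0 : Tendsto α atTop (𝓝 0))
    (hαsum : Tendsto (fun N => ∑ k ∈ Finset.range N, α k) atTop atTop) (hbB : ∀ k, b k ≤ B)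
    (hrec : ∀ k, a (k + 1) ≤ (1 - α k) * a k + α k * b k - c k)
    (hb : ∀ ψ : ℕ → ℕ, Tendsto ψ atTop atTop → Tendsto (c ∘ ψ) atTop (𝓝 0) →
      ∀ ε > 0, ∀ᶠ j in atTop, b (ψ j) < ε) :
    Tendsto a atTop (𝓝 0) := by
  have hcB (k : ℕ) : c k ≤ a k - a (k + 1) + α k * B := by
    linarith [hrec k, mul_nonneg (hα k).1 (ha k), mul_le_mul_of_nonneg_left (hbB k) (hα k).1]
  by_cases hanti : ∀ᶠ k in atTop, a (k + 1) ≤ a k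
  · obtain ⟨ℓ, hℓ⟩ := exists_tendsto_of_eventually_antitone ha hanti
    have hc0 : Tendsto c atTop (𝓝 0) := by
      refine squeeze_zero hc hcB ?_
      simpa using (hℓ.sub ((tendsto_add_atTop_iff_nat 1).2 hℓ)).add (hα0.mul_const B)
    exact tendsto_zero_of_le_one_sub_mul_add_mul ha hα hαsum
      (fun k => (hrec k).trans (sub_le_self _ (hc k))) (hb id tendsto_id hc0)
  · -- Maingé's argument: compare `a n` with `a (τ n + 1)` at the last increase `τ n ≤ n`
    obtain ⟨τ, hτ, hτa⟩ := exists_tendsto_atTop_lt_succ_le_succ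
      ((not_eventually.1 hanti).mono fun k hk => not_le.1 hk)
    have hcτ : Tendsto (c ∘ τ) atTop (𝓝 0) := by
      refine squeeze_zero' (Eventually.of_forall fun n => hc _) ?_
        (by simpa using (hα0.comp hτ).mul_const B)
      filter_upwards [hτa] with n hn
      show c (τ n) ≤ α (τ n) * B
      linarith [hcB (τ n), hn.1]
    refine tendsto_zero_of_forall_eventually_lt ha fun ε hε => ?_
    filter_upwards [hτa, hb τ hτ hcτ ε hε] with n ⟨hinc, hn⟩ hbn
    obtain ⟨hα0, hα1⟩ := hα (τ n)
    have hab : a (τ n) ≤ b (τ n) := by nlinarith [hrec (τ n), hc (τ n)]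
    nlinarith [hrec (τ n), hc (τ n)]

theorem tendsto_zero_of_tendsto_const_mul_sq {ι : Type*} {l : Filter ι} {f : ι → ℝ}
    {κ : ℝ} (hκ : 0 < κ) (hf : ∀ i, 0 ≤ f i) (h : Tendsto (fun i => κ * f i ^ 2) l (𝓝 0)) :
    Tendsto f l (𝓝 0) := by
  simpa [hκ.ne', Real.sqrt_sq (hf _)] using (h.div_const κ).sqrt

end RealSequences

section InnerProductSpace

variable {H : Type*} [NormedAddCommGroup H] [InnerProductSpace ℝ H]

def WeakTendsto (u : ℕ → H) (w : H) : Prop :=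
  ∀ v : H, Tendsto (fun n => ⟪u n, v⟫) atTop (𝓝 ⟪w, v⟫)

theorem WeakTendsto.tendsto_inner_sub {u : ℕ → H} {w : H} (h : WeakTendsto u w) (v y : H) :
    Tendsto (fun n => ⟪v, y - u n⟫) atTop (𝓝 ⟪v, y - w⟫) := by
  simpa only [inner_sub_right, real_inner_comm v] using tendsto_const_nhds.sub (h v)

theorem WeakTendsto.congr_norm_sub {u u' : ℕ → H} {w : H} (h : WeakTendsto u w)
    (hu : Tendsto (fun n => ‖u' n - u n‖) atTop (𝓝 0)) : WeakTendsto u' w := fun v => by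
  have hsmall : Tendsto (fun n => ⟪u' n - u n, v⟫) atTop (𝓝 0) :=
    squeeze_zero_norm (fun n => norm_inner_le_norm _ _) (by simpa using hu.mul_const ‖v‖)
  simpa [inner_sub_left] using hsmall.add (h v)

/-- Sequential Banach–Alaoglu in the separable closed span `M` of the sequence, read through the
Riesz isomorphism; projecting onto `M` does not change the inner products with `u k`. -/
theorem exists_strictMono_weakTendsto [CompleteSpace H] {u : ℕ → H} {B : ℝ}
    (hB : ∀ k, ‖u k‖ ≤ B) : ∃ w : H, ∃ θ : ℕ → ℕ, StrictMono θ ∧ WeakTendsto (u ∘ θ) w := by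
  set M : Submodule ℝ H := (Submodule.span ℝ (Set.range u)).topologicalClosure
  have huM (k : ℕ) : u k ∈ M :=
    Submodule.le_topologicalClosure _ (Submodule.subset_span (Set.mem_range_self k))
  have : CompleteSpace M := (Submodule.isClosed_topologicalClosure _).completeSpace_coe
  have : TopologicalSpace.SeparableSpace M :=
    ((Set.countable_range u).isSeparable.span.closure).separableSpace
  let φ : ℕ → WeakDual ℝ M := fun k => InnerProductSpace.toDual ℝ M ⟨u k, huM k⟩
  obtain ⟨φ₀, -, θ, hθ, hlim⟩ := WeakDual.isSeqCompact_closedBall ℝ M 0 B (x := φ) fun k => by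
    rw [Set.mem_preimage, mem_closedBall_zero_iff]
    exact ((InnerProductSpace.toDual ℝ M).norm_map _).trans_le (hB k)
  refine ⟨(InnerProductSpace.toDual ℝ M).symm (WeakDual.toStrongDual φ₀), θ, hθ, fun v => ?_⟩
  have := ((WeakDual.eval_continuous (M.orthogonalProjectionOnto v)).tendsto φ₀).comp hlim
  rw [← Submodule.inner_orthogonalProjectionOnto_eq_of_mem_left,
    InnerProductSpace.toDual_symm_apply]
  refine this.congr fun n => ?_
  simp only [Function.comp_apply, φ]
  exact Submodule.inner_orthogonalProjectionOnto_eq_of_mem_left _ _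

theorem IsClosed.mem_of_weakTendsto [CompleteSpace H] {X : Set H} (hXcl : IsClosed X)
    (hXconv : Convex ℝ X) {u : ℕ → H} {w : H} (hu : ∀ n, u n ∈ X) (h : WeakTendsto u w) :
    w ∈ X := by
  by_contra hw
  obtain ⟨f, s, hfX, hfw⟩ := geometric_hahn_banach_closed_point hXconv hXcl hw
  have hf (y : H) : f y = ⟪y, (InnerProductSpace.toDual ℝ H).symm f⟫ := by
    rw [real_inner_comm, InnerProductSpace.toDual_symm_apply]
  have hlim : Tendsto (fun n => f (u n)) atTop (𝓝 (f w)) := by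
    simpa only [hf] using h ((InnerProductSpace.toDual ℝ H).symm f)
  exact hfw.not_ge (le_of_tendsto hlim (Eventually.of_forall fun n => (hfX _ (hu n)).le))

theorem exists_mem_forall_norm_le_and_inner_sub_nonneg [CompleteSpace H] {K : Set H}
    (hne : K.Nonempty) (hcl : IsClosed K) (hconv : Convex ℝ K) :
    ∃ p ∈ K, (∀ q ∈ K, ‖p‖ ≤ ‖q‖) ∧ ∀ q ∈ K, 0 ≤ ⟪p, q - p⟫ := by
  obtain ⟨p, hp, hmin⟩ := exists_norm_eq_iInf_of_complete_convex hne hcl.isComplete hconv 0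
  have hvar : ∀ q ∈ K, 0 ≤ ⟪p, q - p⟫ := fun q hq => by
    have := (norm_eq_iInf_iff_real_inner_le_zero hconv hp).1 hmin q hq
    rw [zero_sub, inner_neg_left] at this
    linarith
  refine ⟨p, hp, fun q hq => ?_, hvar⟩
  have h := hvar q hq
  rw [inner_sub_right, real_inner_self_eq_norm_sq] at h
  nlinarith [real_inner_le_norm p q, norm_nonneg p, norm_nonneg q]

theorem norm_smul_add_smul_sq_le (a b : H) {s t : ℝ} (hs : 0 ≤ s) (ht : 0 ≤ t) :
    ‖s • a + t • b‖ ^ 2 ≤ (s + t) * (s * ‖a‖ ^ 2 + t * ‖b‖ ^ 2) := by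
  have h : 2 * ⟪a, b⟫ = ‖a‖ ^ 2 + ‖b‖ ^ 2 - ‖a - b‖ ^ 2 := by
    rw [norm_sub_sq_real]; ring
  rw [norm_add_sq_real, norm_smul, norm_smul, real_inner_smul_left, real_inner_smul_right,
    Real.norm_eq_abs, Real.norm_eq_abs, abs_of_nonneg hs, abs_of_nonneg ht]
  nlinarith [mul_nonneg (mul_nonneg hs ht) (sq_nonneg ‖a - b‖), congrArg (s * t * ·) h]

theorem norm_add_sq_le_norm_sq_add_two_inner (a b : H) :
    ‖a + b‖ ^ 2 ≤ ‖a‖ ^ 2 + 2 * ⟪b, a + b⟫ := by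
  rw [norm_add_sq_real, inner_add_right, real_inner_self_eq_norm_sq, real_inner_comm]
  nlinarith [sq_nonneg ‖b‖]

theorem norm_smul_add_smul_sub_sq_le (x r p : H) {α β : ℝ} (hβ : 0 ≤ β) (hαβ : 0 ≤ 1 - α - β) :
    ‖(1 - α - β) • x + β • r - p‖ ^ 2 ≤
      (1 - α) * ((1 - α - β) * ‖x - p‖ ^ 2 + β * ‖r - p‖ ^ 2) +
        α * (2 * ⟪p, p - ((1 - α - β) • x + β • r)⟫) := by
  set v := (1 - α - β) • (x - p) + β • (r - p)
  have hv : (1 - α - β) • x + β • r - p = v + α • (-p) := by simp only [v]; module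
  have h1 := norm_add_sq_le_norm_sq_add_two_inner v (α • (-p))
  have h2 := norm_smul_add_smul_sq_le (x - p) (r - p) hαβ hβ
  rw [← hv, real_inner_smul_left, ← inner_neg_neg, neg_neg, neg_sub] at h1
  rw [show 1 - α - β + β = 1 - α by ring] at h2
  linarith

theorem norm_iterate_sub_le_max {x r : ℕ → H} {α β : ℕ → ℝ} {p : H}
    (hxs : ∀ k, x (k + 1) = (1 - α k - β k) • x k + β k • r k)
    (hr : ∀ k, ‖r k - p‖ ≤ ‖x k - p‖) (hα : ∀ k, 0 ≤ α k)
    (hβ : ∀ k, 0 ≤ β k ∧ β k ≤ 1 - α k) (k : ℕ) :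
    ‖x k - p‖ ≤ max ‖x 0 - p‖ ‖p‖ := by
  induction k with
  | zero => exact le_max_left _ _
  | succ k ih =>
    obtain ⟨hβ0, hβ1⟩ := hβ k
    have hsplit : x (k + 1) - p = (1 - α k - β k) • (x k - p) + β k • (r k - p) + α k • (-p) := by
      rw [hxs k]; module
    calc ‖x (k + 1) - p‖
        ≤ (1 - α k - β k) * ‖x k - p‖ + β k * ‖r k - p‖ + α k * ‖p‖ := by
          rw [hsplit]
          refine (norm_add₃_le ..).trans_eq ?_
          rw [norm_smul, norm_smul, norm_smul, norm_neg, Real.norm_eq_abs, Real.norm_eq_abs,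
            Real.norm_eq_abs, abs_of_nonneg (by linarith), abs_of_nonneg hβ0, abs_of_nonneg (hα k)]
      _ ≤ (1 - α k - β k) * max ‖x 0 - p‖ ‖p‖ + β k * max ‖x 0 - p‖ ‖p‖
            + α k * max ‖x 0 - p‖ ‖p‖ := by
          have hr' := (hr k).trans ih
          have hp := le_max_right ‖x 0 - p‖ ‖p‖
          have hα' := hα k
          gcongr
      _ = max ‖x 0 - p‖ ‖p‖ := by ring

end InnerProductSpace

section VariationalInequality

variable {H : Type*} [NormedAddCommGroup H] [InnerProductSpace ℝ H]

def viSolutionSet (X : Set H) (F : H → H) : Set H :=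
  {y | y ∈ X ∧ ∀ w ∈ X, 0 ≤ ⟪F y, w - y⟫}

def PseudomonotoneOn (X : Set H) (F : H → H) : Prop :=
  ∀ x ∈ X, ∀ y ∈ X, 0 ≤ ⟪F x, y - x⟫ → 0 ≤ ⟪F y, y - x⟫

theorem PseudomonotoneOn.inner_sub_nonneg {X : Set H} {F : H → H} (hF : PseudomonotoneOn X F)
    {q y : H} (hq : q ∈ viSolutionSet X F) (hy : y ∈ X) : 0 ≤ ⟪F y, y - q⟫ :=
  hF q hq.1 y hy (hq.2 y hy)

theorem PseudomonotoneOn.mem_viSolutionSet_of_weakTendsto [CompleteSpace H] {X : Set H}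
    (hXcl : IsClosed X) (hXconv : Convex ℝ X) {F : H → H} (hF : PseudomonotoneOn X F)
    (hFc : Continuous F) {ζ : ℕ → H} {w : H} (hζX : ∀ j, ζ j ∈ X) (hζ : WeakTendsto ζ w)
    (hFζ : WeakTendsto (F ∘ ζ) (F w))
    (hgap : ∀ y ∈ X, ∀ δ > 0, ∀ᶠ j in atTop, -δ ≤ ⟪F (ζ j), y - ζ j⟫) :
    w ∈ viSolutionSet X F := by
  have hwX : w ∈ X := hXcl.mem_of_weakTendsto hXconv hζX hζ
  refine ⟨hwX, fun y hy => ?_⟩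
  by_contra! hneg
  -- Minty's trick: test pseudomonotonicity at the points of the segment from `w` to `y`
  have hseg : ∀ t ∈ Ioo (0 : ℝ) 1, 0 ≤ ⟪F (w + t • (y - w)), y - w⟫ := by
    rintro t ⟨ht0, ht1⟩
    set wt := w + t • (y - w)
    have hwtX : wt ∈ X := by
      simpa [wt, AffineMap.lineMap_apply, add_comm] using hXconv.lineMap_mem hwX hy ⟨ht0.le, ht1.le⟩
    have hpos : 0 < (1 - t) * ⟪F w, w - y⟫ := by
      rw [← neg_sub y w, inner_neg_right]; nlinarith
    have hlim : Tendsto (fun j => (1 - t) * ⟪F (ζ j), w - y⟫) atTop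
        (𝓝 ((1 - t) * ⟪F w, w - y⟫)) := (hFζ (w - y)).const_mul _
    have hev : ∀ᶠ j in atTop, 0 ≤ ⟪F wt, wt - ζ j⟫ := by
      filter_upwards [hgap y hy _ (half_pos hpos),
        hlim.eventually (lt_mem_nhds (half_lt_self hpos))] with j h1 h2
      refine hF _ (hζX j) _ hwtX ?_
      rw [show wt - ζ j = (y - ζ j) + (1 - t) • (w - y) by simp only [wt]; module,
        inner_add_right, inner_smul_right]
      linarith
    have := ge_of_tendsto (hζ.tendsto_inner_sub (F wt) wt) hev
    rw [show wt - w = t • (y - w) by simp [wt], inner_smul_right] at this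
    exact nonneg_of_mul_nonneg_right this ht0
  have hcont : Tendsto (fun t : ℝ => ⟪F (w + t • (y - w)), y - w⟫) (𝓝[>] 0) (𝓝 ⟪F w, y - w⟫) := by
    have : Continuous fun t : ℝ => ⟪F (w + t • (y - w)), y - w⟫ := by fun_prop
    simpa using this.continuousWithinAt.tendsto (x := 0) (s := Ioi 0)
  have hev : ∀ᶠ t in 𝓝[>] (0 : ℝ), t ∈ Ioo (0 : ℝ) 1 := Ioo_mem_nhdsGT one_pos
  exact hneg.not_ge (ge_of_tendsto hcont (hev.mono hseg))

theorem norm_fbf_sub_sq_le {F : H → H} {L γ : ℝ} (hγ : 0 ≤ γ) {x z q : H}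
    (hLip : ‖F x - F z‖ ≤ L * ‖x - z‖) (hproj : 0 ≤ ⟪x - γ • F x - z, z - q⟫)
    (hFz : 0 ≤ ⟪F z, z - q⟫) :
    ‖z + γ • (F x - F z) - q‖ ^ 2 ≤ ‖x - q‖ ^ 2 - (1 - γ ^ 2 * L ^ 2) * ‖x - z‖ ^ 2 := by
  have hF : ‖F x - F z‖ ^ 2 ≤ L ^ 2 * ‖x - z‖ ^ 2 := by
    rw [← mul_pow]; exact pow_le_pow_left₀ (norm_nonneg _) hLip 2
  have hr : ‖z + γ • (F x - F z) - q‖ ^ 2 =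
      ‖z - q‖ ^ 2 + 2 * γ * (⟪F x, z - q⟫ - ⟪F z, z - q⟫) + γ ^ 2 * ‖F x - F z‖ ^ 2 := by
    rw [show z + γ • (F x - F z) - q = (z - q) + γ • (F x - F z) by abel, norm_add_sq_real,
      inner_smul_right, norm_smul, mul_pow, Real.norm_eq_abs, sq_abs, real_inner_comm,
      inner_sub_left]
    ring
  have hx : ‖x - q‖ ^ 2 = ‖x - z‖ ^ 2 + 2 * ⟪x - z, z - q⟫ + ‖z - q‖ ^ 2 := by
    rw [← norm_add_sq_real, sub_add_sub_cancel]
  rw [show x - γ • F x - z = (x - z) - γ • F x by abel, inner_sub_left,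
    real_inner_smul_left] at hproj
  nlinarith [mul_le_mul_of_nonneg_left hF (sq_nonneg γ), mul_nonneg hγ hFz]

structure IsFBFSequence (X : Set H) (F : H → H) (γ : ℝ) (α β : ℕ → ℝ) (x z r : ℕ → H) : Prop where
  mem : ∀ k, z k ∈ X
  -- `z k = P_X (x k - γ • F (x k))`, in variational form
  proj : ∀ k, ∀ y ∈ X, 0 ≤ ⟪(x k - γ • F (x k)) - z k, z k - y⟫
  r_eq : ∀ k, r k = z k + γ • (F (x k) - F (z k))
  succ_eq : ∀ k, x (k + 1) = (1 - α k - β k) • x k + β k • r k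

namespace IsFBFSequence

variable {X : Set H} {F : H → H} {L γ : ℝ} {α β : ℕ → ℝ} {x z r : ℕ → H}

theorem norm_r_sub_sq_le (hfbf : IsFBFSequence X F γ α β x z r) (hγ : 0 ≤ γ)
    (hLip : ∀ x y : H, ‖F x - F y‖ ≤ L * ‖x - y‖) (hF : PseudomonotoneOn X F) {q : H}
    (hq : q ∈ viSolutionSet X F) (k : ℕ) :
    ‖r k - q‖ ^ 2 ≤ ‖x k - q‖ ^ 2 - (1 - γ ^ 2 * L ^ 2) * ‖x k - z k‖ ^ 2 := by
  rw [hfbf.r_eq k]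
  exact norm_fbf_sub_sq_le hγ (hLip _ _) (hfbf.proj k q hq.1)
    (hF.inner_sub_nonneg hq (hfbf.mem k))

theorem norm_r_sub_le (hfbf : IsFBFSequence X F γ α β x z r) (hγ : 0 ≤ γ)
    (hγL : γ ^ 2 * L ^ 2 ≤ 1) (hLip : ∀ x y : H, ‖F x - F y‖ ≤ L * ‖x - y‖)
    (hF : PseudomonotoneOn X F)
    {q : H} (hq : q ∈ viSolutionSet X F) (k : ℕ) : ‖r k - q‖ ≤ ‖x k - q‖ := by
  have hc : 0 ≤ 1 - γ ^ 2 * L ^ 2 := by linarith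
  refine pow_le_pow_iff_left₀ (norm_nonneg _) (norm_nonneg _) two_ne_zero |>.1 ?_
  nlinarith [hfbf.norm_r_sub_sq_le hγ hLip hF hq k, mul_nonneg hc (sq_nonneg ‖x k - z k‖)]

theorem norm_succ_sub_sq_le (hfbf : IsFBFSequence X F γ α β x z r) (hγ : 0 ≤ γ)
    (hγL : γ ^ 2 * L ^ 2 ≤ 1) (hLip : ∀ x y : H, ‖F x - F y‖ ≤ L * ‖x - y‖)
    (hF : PseudomonotoneOn X F)
    {p : H} (hp : p ∈ viSolutionSet X F) {a₀ : ℝ} (ha₀ : 0 ≤ a₀) (hα : ∀ k, 0 ≤ α k)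
    (hβ : ∀ k, a₀ ≤ β k ∧ β k ≤ 1 - α k) (k : ℕ) :
    ‖x (k + 1) - p‖ ^ 2 ≤ (1 - α k) * ‖x k - p‖ ^ 2 + α k * (2 * ⟪p, p - x (k + 1)⟫)
      - a₀ ^ 2 * (1 - γ ^ 2 * L ^ 2) * ‖x k - z k‖ ^ 2 := by
  obtain ⟨hβ0, hβ1⟩ := hβ k
  have hconv := norm_smul_add_smul_sub_sq_le (x k) (r k) p (ha₀.trans hβ0) (by linarith)
  have hr := hfbf.norm_r_sub_sq_le hγ hLip hF hp k
  rw [← hfbf.succ_eq k] at hconv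
  have hα1 : 0 ≤ 1 - α k := by linarith
  have hs : 0 ≤ (1 - γ ^ 2 * L ^ 2) * ‖x k - z k‖ ^ 2 :=
    mul_nonneg (by linarith) (sq_nonneg _)
  have h1 := mul_le_mul_of_nonneg_left hr (mul_nonneg hα1 (ha₀.trans hβ0))
  have h2 := mul_nonneg (mul_nonneg hα1 (hα k)) (sq_nonneg ‖x k - p‖)
  have h3 : a₀ ^ 2 ≤ (1 - α k) * β k := by nlinarith
  nlinarith [mul_le_mul_of_nonneg_right h3 hs]

theorem norm_succ_sub_le (hfbf : IsFBFSequence X F γ α β x z r) (hγ : 0 ≤ γ)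
    (hLip : ∀ x y : H, ‖F x - F y‖ ≤ L * ‖x - y‖) (hα : ∀ k, 0 ≤ α k)
    (hβ : ∀ k, 0 ≤ β k ∧ β k ≤ 1) (k : ℕ) :
    ‖x (k + 1) - x k‖ ≤ (1 + γ * L) * ‖x k - z k‖ + α k * ‖x k‖ := by
  obtain ⟨hβ0, hβ1⟩ := hβ k
  have hrx : ‖r k - x k‖ ≤ (1 + γ * L) * ‖x k - z k‖ := by
    rw [hfbf.r_eq k, show z k + γ • (F (x k) - F (z k)) - x k
      = -(x k - z k) + γ • (F (x k) - F (z k)) by abel]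
    refine (norm_add_le _ _).trans ?_
    rw [norm_neg, norm_smul, Real.norm_eq_abs, abs_of_nonneg hγ]
    nlinarith [mul_le_mul_of_nonneg_left (hLip (x k) (z k)) hγ]
  calc ‖x (k + 1) - x k‖ = ‖β k • (r k - x k) + α k • (-x k)‖ := by
        rw [hfbf.succ_eq k]; congr 1; module
    _ ≤ β k * ‖r k - x k‖ + α k * ‖x k‖ := by
        refine (norm_add_le _ _).trans_eq ?_
        rw [norm_smul, norm_smul, norm_neg, Real.norm_eq_abs, Real.norm_eq_abs,
          abs_of_nonneg hβ0, abs_of_nonneg (hα k)]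
    _ ≤ (1 + γ * L) * ‖x k - z k‖ + α k * ‖x k‖ := by
        nlinarith [mul_le_mul hβ1 hrx (norm_nonneg _) zero_le_one]

theorem neg_mul_le_mul_inner_sub (hfbf : IsFBFSequence X F γ α β x z r) (hγ : 0 ≤ γ)
    (hLip : ∀ x y : H, ‖F x - F y‖ ≤ L * ‖x - y‖) {y : H} (hy : y ∈ X) (k : ℕ) :
    -((1 + γ * L) * ‖x k - z k‖ * ‖z k - y‖) ≤ γ * ⟪F (z k), y - z k⟫ := by
  have hproj := hfbf.proj k y hy
  rw [show x k - γ • F (x k) - z k = (x k - z k) - γ • (F (x k) - F (z k)) - γ • F (z k) by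
    module, inner_sub_left, inner_sub_left, real_inner_smul_left, real_inner_smul_left] at hproj
  rw [← neg_sub (z k) y, inner_neg_right]
  have h1 := real_inner_le_norm (x k - z k) (z k - y)
  have h2 := neg_le_of_abs_le (abs_real_inner_le_norm (F (x k) - F (z k)) (z k - y))
  have h3 := mul_le_mul_of_nonneg_right (hLip (x k) (z k)) (norm_nonneg (z k - y))
  nlinarith [mul_le_mul_of_nonneg_left h2 hγ, mul_le_mul_of_nonneg_left h3 hγ]

theorem mem_viSolutionSet_of_weakTendsto [CompleteSpace H] (hfbf : IsFBFSequence X F γ α β x z r)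
    (hXcl : IsClosed X) (hXconv : Convex ℝ X) (hF : PseudomonotoneOn X F) (hFc : Continuous F)
    (hFww : ∀ (u : ℕ → H) (v : H), WeakTendsto u v → WeakTendsto (F ∘ u) (F v))
    (hγ : 0 < γ) (hL : 0 ≤ L) (hLip : ∀ x y : H, ‖F x - F y‖ ≤ L * ‖x - y‖) {B : ℝ}
    (hxB : ∀ k, ‖x k‖ ≤ B) {φ : ℕ → ℕ} {w : H}
    (hs : Tendsto (fun j => ‖x (φ j) - z (φ j)‖) atTop (𝓝 0)) (hw : WeakTendsto (x ∘ φ) w) :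
    w ∈ viSolutionSet X F := by
  have hζ : WeakTendsto (z ∘ φ) w :=
    hw.congr_norm_sub (by simpa only [Function.comp_apply, norm_sub_rev] using hs)
  refine hF.mem_viSolutionSet_of_weakTendsto hXcl hXconv hFc (fun j => hfbf.mem _) hζ
    (hFww _ _ hζ) fun y hy δ hδ => ?_
  have hlim : Tendsto (fun j => (1 + γ * L) * ‖x (φ j) - z (φ j)‖ *
      (B + ‖x (φ j) - z (φ j)‖ + ‖y‖)) atTop (𝓝 0) := by
    simpa using (hs.const_mul (1 + γ * L)).mul ((hs.const_add B).add_const ‖y‖)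
  filter_upwards [hlim.eventually (gt_mem_nhds (mul_pos hγ hδ))] with j hj
  have hzy : ‖z (φ j) - y‖ ≤ B + ‖x (φ j) - z (φ j)‖ + ‖y‖ := by
    have := norm_le_norm_add_norm_sub' (z (φ j)) (x (φ j))
    have := norm_sub_le (z (φ j)) y
    rw [norm_sub_rev] at *
    linarith [hxB (φ j)]
  have hgap := hfbf.neg_mul_le_mul_inner_sub hγ.le hLip hy (φ j)
  have hprod := mul_le_mul_of_nonneg_left hzy
    (mul_nonneg (by positivity : 0 ≤ 1 + γ * L) (norm_nonneg (x (φ j) - z (φ j))))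
  exact le_of_mul_le_mul_left (by linarith) hγ

theorem eventually_inner_lt [CompleteSpace H] (hfbf : IsFBFSequence X F γ α β x z r)
    (hXcl : IsClosed X) (hXconv : Convex ℝ X) (hF : PseudomonotoneOn X F) (hFc : Continuous F)
    (hFww : ∀ (u : ℕ → H) (v : H), WeakTendsto u v → WeakTendsto (F ∘ u) (F v))
    (hγ : 0 < γ) (hL : 0 ≤ L) (hLip : ∀ x y : H, ‖F x - F y‖ ≤ L * ‖x - y‖)
    (hα : ∀ k, 0 ≤ α k) (hβ : ∀ k, 0 ≤ β k ∧ β k ≤ 1) (hα0 : Tendsto α atTop (𝓝 0)) {B : ℝ}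
    (hxB : ∀ k, ‖x k‖ ≤ B) {p : H} (hp : ∀ q ∈ viSolutionSet X F, 0 ≤ ⟪p, q - p⟫)
    {ψ : ℕ → ℕ} (hψ : Tendsto ψ atTop atTop)
    (hs : Tendsto (fun j => ‖x (ψ j) - z (ψ j)‖) atTop (𝓝 0)) :
    ∀ ε > 0, ∀ᶠ j in atTop, ⟪p, p - x (ψ j + 1)⟫ < ε := by
  intro ε hε
  by_contra hnot
  obtain ⟨θ, hθ, hθε⟩ :=
    extraction_of_frequently_atTop ((not_eventually.1 hnot).mono fun _ => le_of_not_gt)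
  obtain ⟨w, θ', hθ', hw⟩ := exists_strictMono_weakTendsto (u := x ∘ ψ ∘ θ) fun j => hxB _
  have hθθ' : Tendsto (θ ∘ θ') atTop atTop := (hθ.comp hθ').tendsto_atTop
  have hsφ := hs.comp hθθ'
  have hwsol : w ∈ viSolutionSet X F := hfbf.mem_viSolutionSet_of_weakTendsto hXcl hXconv hF
    hFc hFww hγ hL hLip hxB (φ := ψ ∘ θ ∘ θ') hsφ hw
  have hstep : Tendsto (fun j => ‖x (ψ (θ (θ' j)) + 1) - x (ψ (θ (θ' j)))‖) atTop (𝓝 0) := by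
    refine squeeze_zero (fun _ => norm_nonneg _) (fun j => (hfbf.norm_succ_sub_le hγ.le hLip hα
      hβ _).trans (add_le_add le_rfl (mul_le_mul_of_nonneg_left (hxB _) (hα _)))) ?_
    simpa using (hsφ.const_mul (1 + γ * L)).add (((hα0.comp hψ).comp hθθ').mul_const B)
  have hlim := (hw.congr_norm_sub hstep).tendsto_inner_sub p p
  have hε' : ε ≤ ⟪p, p - w⟫ := ge_of_tendsto hlim (Eventually.of_forall fun j => hθε (θ' j))
  have := hp w hwsol
  rw [inner_sub_right] at this hε'
  linarith

theorem tendsto [CompleteSpace H] (hfbf : IsFBFSequence X F γ α β x z r)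
    (hXcl : IsClosed X) (hXconv : Convex ℝ X) (hF : PseudomonotoneOn X F) (hFc : Continuous F)
    (hFww : ∀ (u : ℕ → H) (v : H), WeakTendsto u v → WeakTendsto (F ∘ u) (F v))
    (hγ : 0 < γ) (hL : 0 ≤ L) (hγL : γ ^ 2 * L ^ 2 < 1)
    (hLip : ∀ x y : H, ‖F x - F y‖ ≤ L * ‖x - y‖) (hα : ∀ k, α k ∈ Ioo (0 : ℝ) 1) {a₀ : ℝ}
    (ha₀ : 0 < a₀) (hβ : ∀ k, a₀ ≤ β k ∧ β k < 1 - α k) (hα0 : Tendsto α atTop (𝓝 0))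
    (hαsum : Tendsto (fun N => ∑ k ∈ Finset.range N, α k) atTop atTop) {p : H}
    (hp : p ∈ viSolutionSet X F) (hpvar : ∀ q ∈ viSolutionSet X F, 0 ≤ ⟪p, q - p⟫) :
    Tendsto x atTop (𝓝 p) := by
  have hα' (k : ℕ) : 0 ≤ α k := (hα k).1.le
  have hβ' (k : ℕ) : a₀ ≤ β k ∧ β k ≤ 1 - α k := ⟨(hβ k).1, (hβ k).2.le⟩
  have hβ1 (k : ℕ) : 0 ≤ β k ∧ β k ≤ 1 := ⟨ha₀.le.trans (hβ k).1, by linarith [hβ k, hα' k]⟩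
  set M := max ‖x 0 - p‖ ‖p‖
  have hxp : ∀ k, ‖x k - p‖ ≤ M := norm_iterate_sub_le_max hfbf.succ_eq
    (hfbf.norm_r_sub_le hγ.le hγL.le hLip hF hp) hα' fun k => ⟨(hβ1 k).1, (hβ' k).2⟩
  have hxB (k : ℕ) : ‖x k‖ ≤ ‖p‖ + M := by
    linarith [norm_le_norm_add_norm_sub' (x k) p, hxp k]
  have hκ : 0 < a₀ ^ 2 * (1 - γ ^ 2 * L ^ 2) := mul_pos (pow_pos ha₀ 2) (by linarith)
  have ha : Tendsto (fun k => ‖x k - p‖ ^ 2) atTop (𝓝 0) := by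
    refine tendsto_zero_of_le_one_sub_mul_add_mul_sub (b := fun k => 2 * ⟪p, p - x (k + 1)⟫)
      (c := fun k => a₀ ^ 2 * (1 - γ ^ 2 * L ^ 2) * ‖x k - z k‖ ^ 2) (B := 2 * (‖p‖ * M))
      (fun k => sq_nonneg _) (fun k => by positivity) (fun k => Ioo_subset_Icc_self (hα k)) hα0
      hαsum (fun k => ?_) (hfbf.norm_succ_sub_sq_le hγ.le hγL.le hLip hF hp ha₀.le hα' hβ')
      fun ψ hψ hc ε hε => ?_
    · have := (real_inner_le_norm p (p - x (k + 1))).trans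
        (mul_le_mul_of_nonneg_left ((norm_sub_rev _ _).trans_le (hxp _)) (norm_nonneg p))
      linarith
    · have hs := tendsto_zero_of_tendsto_const_mul_sq hκ (fun _ => norm_nonneg _) hc
      filter_upwards [hfbf.eventually_inner_lt hXcl hXconv hF hFc hFww hγ hL hLip hα' hβ1 hα0 hxB
        hpvar hψ hs (ε / 2) (half_pos hε)] with j hj
      linarith
  exact tendsto_iff_norm_sub_tendsto_zero.2
    (tendsto_zero_of_tendsto_const_mul_sq one_pos (fun _ => norm_nonneg _) (by simpa using ha))

end IsFBFSequence

end VariationalInequality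

theorem fbf_strong_convergence_general
    {H : Type*} [NormedAddCommGroup H] [InnerProductSpace ℝ H] [CompleteSpace H]
    (X : Set H) (hXcl : IsClosed X) (hXconv : Convex ℝ X)
    (F : H → H) (L : ℝ) (hL : 0 < L)
    (hLip : ∀ x y : H, ‖F x - F y‖ ≤ L * ‖x - y‖)
    (hPM : ∀ x ∈ X, ∀ y ∈ X, 0 ≤ ⟪F x, y - x⟫ → 0 ≤ ⟪F y, y - x⟫)
    (hFww : ∀ (u : ℕ → H) (v : H),
      (∀ w : H, Tendsto (fun n => ⟪u n, w⟫) atTop (nhds ⟪v, w⟫)) →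
      ∀ w : H, Tendsto (fun n => ⟪F (u n), w⟫) atTop (nhds ⟪F v, w⟫))
    (Xstar : Set H)
    (hXstar : Xstar = {y | y ∈ X ∧ ∀ w ∈ X, 0 ≤ ⟪F y, w - y⟫})
    (hXstarNe : Xstar.Nonempty) (hXstarCl : IsClosed Xstar) (hXstarConv : Convex ℝ Xstar)
    (γ : ℝ) (hγ : γ ∈ Set.Ioo 0 (1 / L))
    (α β : ℕ → ℝ) (hα : ∀ k, α k ∈ Set.Ioo (0 : ℝ) 1)
    (hαβ : ∃ a : ℝ, 0 < a ∧ ∀ k, a ≤ β k ∧ β k < 1 - α k)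
    (hα0 : Tendsto α atTop (nhds 0))
    (hαsum : Tendsto (fun N => ∑ k ∈ Finset.range N, α k) atTop atTop)
    (x z r : ℕ → H)
    -- `z k = P_X (x k - γ F (x k))`, via the variational characterization of the projection
    (hz : ∀ k, z k ∈ X ∧ ∀ y ∈ X, 0 ≤ ⟪(x k - γ • F (x k)) - z k, z k - y⟫)
    (hr : ∀ k, r k = z k + γ • (F (x k) - F (z k)))
    (hxs : ∀ k, x (k + 1) = (1 - α k - β k) • x k + β k • r k)
 :
    ∃ p ∈ Xstar, (∀ q ∈ Xstar, ‖p‖ ≤ ‖q‖) ∧ Tendsto x atTop (nhds p) := by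
  subst hXstar
  obtain ⟨hγ0, hγ1⟩ := hγ
  have hγL : γ ^ 2 * L ^ 2 < 1 := by
    have := (lt_div_iff₀ hL).1 hγ1
    nlinarith [mul_pos hγ0 hL]
  have hFc : Continuous F :=
    (LipschitzWith.of_dist_le_mul (K := ⟨L, hL.le⟩) fun u v => by
      rw [dist_eq_norm, dist_eq_norm]; exact hLip u v).continuous
  obtain ⟨a₀, ha₀, hβ⟩ := hαβ
  obtain ⟨p, hp, hpmin, hpvar⟩ :=
    exists_mem_forall_norm_le_and_inner_sub_nonneg hXstarNe hXstarCl hXstarConv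
  exact ⟨p, hp, hpmin, IsFBFSequence.tendsto ⟨fun k => (hz k).1, fun k => (hz k).2, hr, hxs⟩
    hXcl hXconv hPM hFc hFww hγ0 hL.le hγL hLip hα ha₀ hβ hα0 hαsum hp hpvar⟩

/-- Strong convergence of the FBF algorithm (constant step-size) to the
minimal-norm solution of `VI(X,F)`. -/
theorem fbf_strong_convergence
    {H : Type*} [NormedAddCommGroup H] [InnerProductSpace ℝ H] [CompleteSpace H]
    (X : Set H) (hXne : X.Nonempty) (hXcl : IsClosed X) (hXconv : Convex ℝ X)
    (F : H → H) (L : ℝ) (hL : 0 < L)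
    (hLip : ∀ x y : H, ‖F x - F y‖ ≤ L * ‖x - y‖)
    (hPM : ∀ x ∈ X, ∀ y ∈ X, 0 ≤ ⟪F x, y - x⟫ → 0 ≤ ⟪F y, y - x⟫)
    (hFww : ∀ (u : ℕ → H) (v : H),
      (∀ w : H, Tendsto (fun n => ⟪u n, w⟫) atTop (nhds ⟪v, w⟫)) →
      ∀ w : H, Tendsto (fun n => ⟪F (u n), w⟫) atTop (nhds ⟪F v, w⟫))
    (Xstar : Set H)
    (hXstar : Xstar = {y | y ∈ X ∧ ∀ w ∈ X, 0 ≤ ⟪F y, w - y⟫})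
    (hXstarNe : Xstar.Nonempty) (hXstarCl : IsClosed Xstar) (hXstarConv : Convex ℝ Xstar)
    (γ : ℝ) (hγ : γ ∈ Set.Ioo 0 (1 / L))
    (α β : ℕ → ℝ) (hα : ∀ k, α k ∈ Set.Ioo (0 : ℝ) 1) (hβ : ∀ k, β k ∈ Set.Ioo (0 : ℝ) 1)
    (hαβ : ∃ a : ℝ, 0 < a ∧ ∀ k, a ≤ β k ∧ β k < 1 - α k)
    (hα0 : Tendsto α atTop (nhds 0))
    (hαsum : Tendsto (fun N => ∑ k ∈ Finset.range N, α k) atTop atTop)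
    (x z r : ℕ → H) (hx0 : x 0 ∈ X)
    -- `z k = P_X (x k - γ F (x k))`, via the variational characterization of the projection
    (hz : ∀ k, z k ∈ X ∧ ∀ y ∈ X, 0 ≤ ⟪(x k - γ • F (x k)) - z k, z k - y⟫)
    (hr : ∀ k, r k = z k + γ • (F (x k) - F (z k)))
    (hxs : ∀ k, x (k + 1) = (1 - α k - β k) • x k + β k • r k)
 :
    ∃ p ∈ Xstar, (∀ q ∈ Xstar, ‖p‖ ≤ ‖q‖) ∧ Tendsto x atTop (nhds p) :=
  fbf_strong_convergence_general X hXcl hXconv F L hL hLip hPM hFww Xstar hXstar hXstarNe hXstarCl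
    hXstarConv γ hγ α β hα hαβ hα0 hαsum x z r hz hr hxs
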